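/- arXiv:2210.13754 — 2 statements merged into one kernel-verified Lean document; each statement's English description precedes it below -/
import Mathlib

section
/- Let f : [0, ∞) → ℝ be nonnegative and measurable, let F(x) = ∫₀ˣ f(t) dt, and let p > 1. Then ∫₀^∞ (F(x)/x)^p dx ≤ (p/(p-1))^p ∫₀^∞ f(x)^p dx. -/
open MeasureTheory Set

open scoped ENNReal

/-!
With `q = p/(p-1)` the conjugate exponent, Hölder's inequality on `(0, x]` against the weight
`t^(1/(pq))` gives `(F x / x)^p ≤ q^(p-1) x^((p-1)/q - p) ∫₀ˣ f(t)^p t^(1/q) dt`. Integrating over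
`x > 0` and exchanging the order of integration, the inner integral
`∫ₜ^∞ x^((p-1)/q - p) dx = q t^(-1/q)` cancels the weight exactly, leaving `q^(p-1) · q ∫ f^p`.
-/

lemma lintegral_Ioc_ofReal_rpow {a x : ℝ} (ha : -1 < a) (hx : 0 < x) :
    ∫⁻ t in Ioc 0 x, ENNReal.ofReal t ^ a
      = ENNReal.ofReal (a + 1)⁻¹ * ENNReal.ofReal x ^ (a + 1) := by
  have ha1 : 0 < a + 1 := by linarith
  rw [setLIntegral_congr_fun measurableSet_Ioc fun t ht => ENNReal.ofReal_rpow_of_pos ht.1,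
    ← ofReal_integral_eq_lintegral_ofReal, ← intervalIntegral.integral_of_le hx.le,
    integral_rpow (Or.inl ha), Real.zero_rpow ha1.ne', sub_zero, ENNReal.ofReal_rpow_of_pos hx,
    ← ENNReal.ofReal_mul (inv_nonneg.2 ha1.le), div_eq_inv_mul]
  · exact (intervalIntegral.intervalIntegrable_rpow' ha).1
  · exact ae_restrict_of_forall_mem measurableSet_Ioc fun t ht => Real.rpow_nonneg ht.1.le a

lemma lintegral_Ici_ofReal_rpow {a t : ℝ} (ha : a < -1) (ht : 0 < t) :
    ∫⁻ x in Ici t, ENNReal.ofReal x ^ a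
      = ENNReal.ofReal (-(a + 1))⁻¹ * ENNReal.ofReal t ^ (a + 1) := by
  rw [← Measure.restrict_congr_set Ioi_ae_eq_Ici,
    setLIntegral_congr_fun measurableSet_Ioi fun x hx => ENNReal.ofReal_rpow_of_pos (ht.trans hx),
    ← ofReal_integral_eq_lintegral_ofReal, integral_Ioi_rpow_of_lt ha ht,
    ENNReal.ofReal_rpow_of_pos ht, ← ENNReal.ofReal_mul (inv_nonneg.2 (by linarith)),
    neg_div, ← div_neg, div_eq_inv_mul]
  · exact integrableOn_Ioi_rpow_of_lt ha ht
  · exact ae_restrict_of_forall_mem measurableSet_Ioi fun x hx =>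
      Real.rpow_nonneg (ht.trans hx).le a

lemma lintegral_Ioi_mul_lintegral_Ioc_eq (μ : Measure ℝ) [SFinite μ] (a : ℝ) {g k : ℝ → ℝ≥0∞}
    (hg : Measurable g) (hk : Measurable k) :
    ∫⁻ x in Ioi a, k x * ∫⁻ t in Ioc a x, g t ∂μ ∂μ
      = ∫⁻ t in Ioi a, g t * ∫⁻ x in Ici t, k x ∂μ ∂μ := by
  set Φ : ℝ × ℝ → ℝ≥0∞ := {z | z.2 ≤ z.1}.indicator fun z => k z.1 * g z.2
  have hΦ : Measurable Φ := ((hk.comp measurable_fst).mul (hg.comp measurable_snd)).indicator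
    (measurableSet_le measurable_snd measurable_fst)
  have inner_Ioc (x : ℝ) : k x * ∫⁻ t in Ioc a x, g t ∂μ = ∫⁻ t in Ioi a, Φ (x, t) ∂μ := by
    rw [← lintegral_const_mul _ hg, ← Iic_inter_Ioi, ← Measure.restrict_restrict measurableSet_Iic,
      ← lintegral_indicator measurableSet_Iic]
    rfl
  have inner_Ici (t : ℝ) (ht : t ∈ Ioi a) :
      g t * ∫⁻ x in Ici t, k x ∂μ = ∫⁻ x in Ioi a, Φ (x, t) ∂μ := by
    rw [← lintegral_const_mul _ hk, ← inter_eq_left.2 (Ici_subset_Ioi.2 ht),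
      ← Measure.restrict_restrict measurableSet_Ici, ← lintegral_indicator measurableSet_Ici]
    simp only [Φ, indicator, mem_Ici, mem_ofPred_eq, mul_comm]
  rw [lintegral_congr inner_Ioc, setLIntegral_congr_fun measurableSet_Ioi inner_Ici]
  exact lintegral_lintegral_swap hΦ.aemeasurable

lemma lintegral_Ioc_rpow_le {p q x : ℝ} (hpq : p.HolderConjugate q) (hx : 0 < x) {u : ℝ → ℝ≥0∞}
    (hu : AEMeasurable u (volume.restrict (Ioc 0 x))) :
    (∫⁻ t in Ioc 0 x, u t) ^ p
      ≤ ENNReal.ofReal q ^ (p - 1) * ENNReal.ofReal x ^ ((p - 1) / q)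
        * ∫⁻ t in Ioc 0 x, u t ^ p * ENNReal.ofReal t ^ q⁻¹ := by
  obtain ⟨hp, hq⟩ : 0 < p ∧ 0 < q := ⟨hpq.pos, hpq.symm.pos⟩
  set s : ℝ := (p * q)⁻¹
  have hw : Measurable fun t : ℝ => ENNReal.ofReal t ^ s :=
    ENNReal.measurable_ofReal.pow_const s
  have hw' : Measurable fun t : ℝ => ENNReal.ofReal t ^ (-s) :=
    ENNReal.measurable_ofReal.pow_const (-s)
  -- Hölder for `u = (u · t^s) · t^(-s)`, with `s = 1/(pq)` chosen so that `(t^(-s))^q = t^(-1/p)`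
  -- is integrable at `0`.
  have factor : ∫⁻ t in Ioc 0 x, u t = ∫⁻ t in Ioc 0 x,
      ((fun t => u t * ENNReal.ofReal t ^ s) * fun t => ENNReal.ofReal t ^ (-s)) t := by
    refine setLIntegral_congr_fun measurableSet_Ioc fun t ht => ?_
    rw [Pi.mul_apply, mul_assoc, ← ENNReal.rpow_add _ _ (ENNReal.ofReal_pos.2 ht.1).ne'
      ENNReal.ofReal_ne_top, add_neg_cancel, ENNReal.rpow_zero, mul_one]
  have weighted_p : ∫⁻ t in Ioc 0 x, (u t * ENNReal.ofReal t ^ s) ^ p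
      = ∫⁻ t in Ioc 0 x, u t ^ p * ENNReal.ofReal t ^ q⁻¹ := by
    refine lintegral_congr fun t => ?_
    rw [ENNReal.mul_rpow_of_nonneg _ _ hp.le, ← ENNReal.rpow_mul]
    congr 2
    simp only [s]
    field_simp
  have weight_q : ∫⁻ t in Ioc 0 x, (ENNReal.ofReal t ^ (-s)) ^ q
      = ENNReal.ofReal q * ENNReal.ofReal x ^ q⁻¹ := by
    have hexp : -s * q = -p⁻¹ := by simp only [s]; field_simp
    have := lintegral_Ioc_ofReal_rpow (neg_lt_neg (inv_lt_one_of_one_lt₀ hpq.lt)) hx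
    rw [neg_add_eq_sub, hpq.one_sub_inv, inv_inv] at this
    simp_rw [← ENNReal.rpow_mul, hexp, this]
  calc (∫⁻ t in Ioc 0 x, u t) ^ p
      ≤ ((∫⁻ t in Ioc 0 x, u t ^ p * ENNReal.ofReal t ^ q⁻¹) ^ (1 / p)
          * (ENNReal.ofReal q * ENNReal.ofReal x ^ q⁻¹) ^ (1 / q)) ^ p := by
        rw [← weighted_p, ← weight_q, factor]
        gcongr
        exact ENNReal.lintegral_mul_le_Lp_mul_Lq _ hpq (hu.mul hw.aemeasurable) hw'.aemeasurable
    _ = _ := by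
        rw [ENNReal.mul_rpow_of_nonneg _ _ hp.le, ← ENNReal.rpow_mul, ← ENNReal.rpow_mul,
          one_div_mul_cancel hp.ne', ENNReal.rpow_one, one_div_mul_eq_div, hpq.div_conj_eq_sub_one,
          ENNReal.mul_rpow_of_nonneg _ _ hpq.sub_one_pos.le, ← ENNReal.rpow_mul, mul_comm,
          inv_mul_eq_div]

lemma ofReal_setIntegral_Ioc_div_rpow_le {p q x : ℝ} (hpq : p.HolderConjugate q) (hx : 0 < x)
    {f : ℝ → ℝ} (hf : AEMeasurable f (volume.restrict (Ioc 0 x)))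
    (hf0 : 0 ≤ᵐ[volume.restrict (Ioc 0 x)] f) :
    ENNReal.ofReal (((∫ t in Ioc 0 x, f t) / x) ^ p)
      ≤ ENNReal.ofReal q ^ (p - 1) * (ENNReal.ofReal x ^ ((p - 1) / q - p)
        * ∫⁻ t in Ioc 0 x, ENNReal.ofReal (f t) ^ p * ENNReal.ofReal t ^ q⁻¹) := by
  have hp := hpq.pos
  have hF0 : 0 ≤ ∫ t in Ioc 0 x, f t := integral_nonneg_of_ae hf0
  have hF : ENNReal.ofReal (∫ t in Ioc 0 x, f t) ≤ ∫⁻ t in Ioc 0 x, ENNReal.ofReal (f t) := by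
    rw [integral_eq_lintegral_of_nonneg_ae hf0 hf.aestronglyMeasurable]
    exact ENNReal.ofReal_toReal_le
  calc ENNReal.ofReal (((∫ t in Ioc 0 x, f t) / x) ^ p)
      = ENNReal.ofReal (∫ t in Ioc 0 x, f t) ^ p / ENNReal.ofReal x ^ p := by
        rw [Real.div_rpow hF0 hx.le, ENNReal.ofReal_div_of_pos (Real.rpow_pos_of_pos hx p),
          ENNReal.ofReal_rpow_of_nonneg hF0 hp.le, ENNReal.ofReal_rpow_of_pos hx]
    _ ≤ (ENNReal.ofReal q ^ (p - 1) * ENNReal.ofReal x ^ ((p - 1) / q)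
          * ∫⁻ t in Ioc 0 x, ENNReal.ofReal (f t) ^ p * ENNReal.ofReal t ^ q⁻¹)
          / ENNReal.ofReal x ^ p := by
        gcongr
        exact (ENNReal.rpow_le_rpow hF hp.le).trans
          (lintegral_Ioc_rpow_le hpq hx hf.ennreal_ofReal)
    _ = _ := by
        rw [ENNReal.rpow_sub _ _ (ENNReal.ofReal_pos.2 hx).ne' ENNReal.ofReal_ne_top]
        simp only [div_eq_mul_inv]
        ring

lemma ofReal_rpow_mul_lintegral_Ici {p q t : ℝ} (hpq : p.HolderConjugate q) (ht : 0 < t) :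
    ENNReal.ofReal t ^ q⁻¹ * ∫⁻ x in Ici t, ENNReal.ofReal x ^ ((p - 1) / q - p)
      = ENNReal.ofReal q := by
  have hexp : (p - 1) / q - p + 1 = -q⁻¹ := by
    field_simp [hpq.symm.ne_zero]
    linear_combination -hpq.mul_eq_add
  have hlt : (p - 1) / q - p < -1 := by linarith [hpq.symm.inv_pos]
  rw [lintegral_Ici_ofReal_rpow hlt ht, hexp, neg_neg, inv_inv, mul_left_comm,
    ← ENNReal.rpow_add _ _ (ENNReal.ofReal_pos.2 ht).ne' ENNReal.ofReal_ne_top, add_neg_cancel,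
    ENNReal.rpow_zero, mul_one]

/-- **Hardy's inequality** on `(0, ∞)` with the sharp constant `(p/(p-1))^p`:
if `f ≥ 0` is measurable and `F x = ∫₀ˣ f`, then for `p > 1`,
`∫₀^∞ (F x / x)^p dx ≤ (p/(p-1))^p ∫₀^∞ f(x)^p dx`. -/
theorem hardy_inequality (f : ℝ → ℝ) (hf : Measurable f) (hf0 : ∀ t, 0 ≤ f t)
    (p : ℝ) (hp : 1 < p) (F : ℝ → ℝ) (hF : ∀ x, F x = ∫ t in Ioc (0 : ℝ) x, f t) :
    ∫⁻ x in Ioi (0 : ℝ), ENNReal.ofReal ((F x / x) ^ p)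
      ≤ ENNReal.ofReal ((p / (p - 1)) ^ p) * ∫⁻ x in Ioi (0 : ℝ), ENNReal.ofReal (f x ^ p) := by
  have hpq : p.HolderConjugate (p / (p - 1)) := .conjExponent hp
  set q := p / (p - 1)
  set g : ℝ → ℝ≥0∞ := fun t => ENNReal.ofReal (f t) ^ p * ENNReal.ofReal t ^ q⁻¹
  set k : ℝ → ℝ≥0∞ := fun x => ENNReal.ofReal x ^ ((p - 1) / q - p)
  have hg : Measurable g := (hf.ennreal_ofReal.pow_const p).mul
    (ENNReal.measurable_ofReal.pow_const _)
  have hk : Measurable k := ENNReal.measurable_ofReal.pow_const _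
  have hC : ENNReal.ofReal q ^ (p - 1) ≠ ∞ :=
    ENNReal.rpow_ne_top_of_nonneg hpq.sub_one_pos.le ENNReal.ofReal_ne_top
  calc ∫⁻ x in Ioi 0, ENNReal.ofReal ((F x / x) ^ p)
      ≤ ∫⁻ x in Ioi 0, ENNReal.ofReal q ^ (p - 1) * (k x * ∫⁻ t in Ioc 0 x, g t) :=
        setLIntegral_mono' measurableSet_Ioi fun x hx => hF x ▸
          ofReal_setIntegral_Ioc_div_rpow_le hpq hx hf.aemeasurable (.of_forall hf0)
    _ = ENNReal.ofReal q ^ (p - 1) * ∫⁻ t in Ioi 0, g t * ∫⁻ x in Ici t, k x := by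
        rw [lintegral_const_mul' _ _ hC, lintegral_Ioi_mul_lintegral_Ioc_eq _ _ hg hk]
    _ = ENNReal.ofReal q ^ (p - 1)
          * ∫⁻ t in Ioi 0, ENNReal.ofReal q * ENNReal.ofReal (f t ^ p) := by
        congr 1
        refine setLIntegral_congr_fun measurableSet_Ioi fun t ht => ?_
        rw [mul_assoc, ofReal_rpow_mul_lintegral_Ici hpq ht,
          ENNReal.ofReal_rpow_of_nonneg (hf0 t) hpq.pos.le, mul_comm]
    _ = ENNReal.ofReal (q ^ p) * ∫⁻ x in Ioi 0, ENNReal.ofReal (f x ^ p) := by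
        rw [lintegral_const_mul' _ _ ENNReal.ofReal_ne_top, ← mul_assoc,
          ENNReal.ofReal_rpow_of_nonneg hpq.symm.pos.le hpq.sub_one_pos.le,
          ← ENNReal.ofReal_mul (Real.rpow_nonneg hpq.symm.pos.le _),
          ← Real.rpow_add_one hpq.symm.ne_zero, sub_add_cancel]
end

section
/- The function h(r) = 1/tanh(r) - 1/r satisfies 0 ≤ h'(r) = 1/r² - 1/sinh²(r) ≤ 1/3 for all r > 0, with h'(r) → 1/3 as r → 0, and the function k(r) = (1/r - 1/tanh(r))·(1/sinh(r)) satisfies |k(r)| ≤ 1/3 for all r > 0. -/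
/-!
Each inequality has the form `0 ≤ F x` for `x ≥ 0`, with `F` built from polynomials, `cosh` and
`sinh` and `F 0 = 0`; it follows by monotonicity from `F' ≥ 0`, an inequality of the same kind.
The upper bound `h' ≤ 1/3` means `(3 - r²) sinh² r ≤ 3 r²`, which `2 sinh² r = cosh 2r - 1`
turns into `(12 - x²)(cosh x - 1) ≤ 6 x²`; this takes three differentiations. The bound on `k`
is `3 r cosh r - 3 sinh r ≤ r² sinh r ≤ r sinh² r`, and the limit of `h'` comes from squeezing
it between `1 / (3 + r²)` (by `r + r³/6 ≤ sinh r`) and `1/3`.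
-/

open Filter Set Topology

theorem le_of_hasDerivAt_nonneg {f f' : ℝ → ℝ} {a x : ℝ} (hf : ∀ y, HasDerivAt f (f' y) y)
    (hf' : ∀ y, a < y → 0 ≤ f' y) (hx : a ≤ x) : f a ≤ f x :=
  monotoneOn_of_hasDerivWithinAt_nonneg (convex_Ici a)
    (fun y _ => (hf y).continuousAt.continuousWithinAt) (fun y _ => (hf y).hasDerivWithinAt)
    (by rw [interior_Ici]; exact hf') self_mem_Ici hx hx

namespace Real

variable {x r : ℝ}

theorem sinh_le_mul_cosh (hx : 0 ≤ x) : sinh x ≤ x * cosh x := by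
  have hderiv (y : ℝ) : HasDerivAt (fun y => y * cosh y - sinh y) (y * sinh y) y :=
    (((hasDerivAt_id y).mul (hasDerivAt_cosh y)).sub (hasDerivAt_sinh y)).congr_deriv
      (by simp only [id_eq]; ring)
  have := le_of_hasDerivAt_nonneg hderiv
    (fun y hy => mul_nonneg hy.le (sinh_nonneg_iff.mpr hy.le)) hx
  simp only [zero_mul, sinh_zero, sub_zero] at this
  linarith

theorem one_add_sq_div_two_le_cosh (x : ℝ) : 1 + x ^ 2 / 2 ≤ cosh x := by
  have hderiv (y : ℝ) : HasDerivAt (fun y => cosh y - y ^ 2 / 2) (sinh y - y) y :=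
    ((hasDerivAt_cosh y).sub ((hasDerivAt_pow 2 y).div_const 2)).congr_deriv
      (by push_cast; ring)
  have := le_of_hasDerivAt_nonneg hderiv
    (fun y hy => sub_nonneg.mpr (self_le_sinh_iff.mpr hy.le)) (abs_nonneg x)
  simp only [cosh_zero, cosh_abs, sq_abs] at this
  linarith

theorem add_pow_three_div_six_le_sinh (hx : 0 ≤ x) : x + x ^ 3 / 6 ≤ sinh x := by
  have hderiv (y : ℝ) :
      HasDerivAt (fun y => sinh y - y - y ^ 3 / 6) (cosh y - 1 - y ^ 2 / 2) y :=
    (((hasDerivAt_sinh y).sub (hasDerivAt_id y)).sub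
      ((hasDerivAt_pow 3 y).div_const 6)).congr_deriv (by push_cast; ring)
  have := le_of_hasDerivAt_nonneg hderiv
    (fun y _ => by linarith [one_add_sq_div_two_le_cosh y]) hx
  simp only [sinh_zero] at this
  linarith

theorem three_mul_mul_cosh_le (hx : 0 ≤ x) : 3 * x * cosh x ≤ (3 + x ^ 2) * sinh x := by
  have hderiv (y : ℝ) : HasDerivAt (fun y => (3 + y ^ 2) * sinh y - 3 * y * cosh y)
      (y * (y * cosh y - sinh y)) y :=
    ((((hasDerivAt_pow 2 y).const_add 3).mul (hasDerivAt_sinh y)).sub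
      (((hasDerivAt_id y).const_mul 3).mul (hasDerivAt_cosh y))).congr_deriv
      (by simp only [id_eq]; push_cast; ring)
  have := le_of_hasDerivAt_nonneg hderiv
    (fun y hy => mul_nonneg hy.le (sub_nonneg.mpr (sinh_le_mul_cosh hy.le))) hx
  simp only [sinh_zero] at this
  linarith

/-- Differentiating three times, each derivative vanishing at `0`, leads to
`6 x cosh x + (x² - 6) sinh x`, which is nonnegative by `sinh_le_mul_cosh`. -/
theorem twelve_sub_sq_mul_cosh_sub_one_le (x : ℝ) :
    (12 - x ^ 2) * (cosh x - 1) ≤ 6 * x ^ 2 := by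
  have hderiv₃ (y : ℝ) : HasDerivAt (fun y => (y ^ 2 - 10) * cosh y + 4 * y * sinh y)
      (6 * y * cosh y + (y ^ 2 - 6) * sinh y) y :=
    ((((hasDerivAt_pow 2 y).sub_const 10).mul (hasDerivAt_cosh y)).add
      (((hasDerivAt_id y).const_mul 4).mul (hasDerivAt_sinh y))).congr_deriv
      (by simp only [id_eq]; push_cast; ring)
  have hderiv₂ (y : ℝ) : HasDerivAt (fun y => 2 * y * cosh y + (y ^ 2 - 12) * sinh y + 10 * y)
      ((y ^ 2 - 10) * cosh y + 4 * y * sinh y + 10) y :=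
    (((((hasDerivAt_id y).const_mul 2).mul (hasDerivAt_cosh y)).add
      (((hasDerivAt_pow 2 y).sub_const 12).mul (hasDerivAt_sinh y))).add
      ((hasDerivAt_id y).const_mul 10)).congr_deriv (by simp only [id_eq]; push_cast; ring)
  have hderiv₁ (y : ℝ) : HasDerivAt (fun y => (y ^ 2 - 12) * cosh y + 5 * y ^ 2)
      (2 * y * cosh y + (y ^ 2 - 12) * sinh y + 10 * y) y :=
    ((((hasDerivAt_pow 2 y).sub_const 12).mul (hasDerivAt_cosh y)).add
      ((hasDerivAt_pow 2 y).const_mul 5)).congr_deriv (by push_cast; ring)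
  have h₃ (y : ℝ) (hy : 0 < y) : 0 ≤ 6 * y * cosh y + (y ^ 2 - 6) * sinh y := by
    nlinarith [sinh_le_mul_cosh hy.le, sinh_nonneg_iff.mpr hy.le, sq_nonneg y]
  have h₂ (y : ℝ) (hy : 0 < y) : 0 ≤ (y ^ 2 - 10) * cosh y + 4 * y * sinh y + 10 := by
    have := le_of_hasDerivAt_nonneg hderiv₃ h₃ hy.le
    simp only [cosh_zero, sinh_zero] at this
    linarith
  have h₁ (y : ℝ) (hy : 0 < y) : 0 ≤ 2 * y * cosh y + (y ^ 2 - 12) * sinh y + 10 * y := by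
    have := le_of_hasDerivAt_nonneg hderiv₂ h₂ hy.le
    simp only [cosh_zero, sinh_zero] at this
    linarith
  have := le_of_hasDerivAt_nonneg hderiv₁ h₁ (abs_nonneg x)
  simp only [cosh_zero, cosh_abs, sq_abs] at this
  linarith

theorem three_sub_sq_mul_sinh_sq_le (x : ℝ) : (3 - x ^ 2) * sinh x ^ 2 ≤ 3 * x ^ 2 := by
  have := twelve_sub_sq_mul_cosh_sub_one_le (2 * x)
  rw [cosh_two_mul, cosh_sq] at this
  linear_combination this / 8

theorem one_div_sq_sub_one_div_sinh_sq_eq (hr : r ≠ 0) :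
    1 / r ^ 2 - 1 / sinh r ^ 2 = (sinh r ^ 2 - r ^ 2) / (r ^ 2 * sinh r ^ 2) := by
  have : sinh r ≠ 0 := sinh_ne_zero.mpr hr
  field_simp

theorem hasDerivAt_one_div_tanh_sub_one_div (hr : r ≠ 0) :
    HasDerivAt (fun s => 1 / tanh s - 1 / s) (1 / r ^ 2 - 1 / sinh r ^ 2) r := by
  have hs : sinh r ≠ 0 := sinh_ne_zero.mpr hr
  have hcoth : (fun s => 1 / tanh s - 1 / s) = fun s => cosh s / sinh s - s⁻¹ := by
    funext s
    rw [tanh_eq_sinh_div_cosh, one_div_div, one_div]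
  rw [hcoth]
  refine (((hasDerivAt_cosh r).div (hasDerivAt_sinh r) hs).sub (hasDerivAt_inv hr)).congr_deriv ?_
  field_simp
  linear_combination -r ^ 2 * cosh_sq_sub_sinh_sq r

theorem one_div_sq_sub_one_div_sinh_sq_nonneg (hr : 0 < r) :
    0 ≤ 1 / r ^ 2 - 1 / sinh r ^ 2 := by
  rw [one_div_sq_sub_one_div_sinh_sq_eq hr.ne']
  have := self_lt_sinh_iff.mpr hr
  exact div_nonneg (by nlinarith) (by positivity)

theorem one_div_sq_sub_one_div_sinh_sq_le (hr : r ≠ 0) :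
    1 / r ^ 2 - 1 / sinh r ^ 2 ≤ 1 / 3 := by
  have hs : sinh r ≠ 0 := sinh_ne_zero.mpr hr
  rw [one_div_sq_sub_one_div_sinh_sq_eq hr, div_le_div_iff₀ (by positivity) three_pos]
  linarith [three_sub_sq_mul_sinh_sq_le r]

theorem one_div_three_add_sq_le (hr : 0 < r) :
    1 / (3 + r ^ 2) ≤ 1 / r ^ 2 - 1 / sinh r ^ 2 := by
  have hs := add_pow_three_div_six_le_sinh hr.le
  have hsq : (r + r ^ 3 / 6) ^ 2 ≤ sinh r ^ 2 := pow_le_pow_left₀ (by positivity) hs 2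
  rw [one_div_sq_sub_one_div_sinh_sq_eq hr.ne',
    div_le_div_iff₀ (by positivity) (by have := sinh_pos_iff.mpr hr; positivity)]
  nlinarith [pow_nonneg hr.le 6]

theorem tendsto_one_div_sq_sub_one_div_sinh_sq :
    Tendsto (fun r => 1 / r ^ 2 - 1 / sinh r ^ 2) (𝓝[>] 0) (𝓝 (1 / 3)) := by
  have hlower : Tendsto (fun r : ℝ => 1 / (3 + r ^ 2)) (𝓝[>] 0) (𝓝 (1 / 3)) := by
    have : Continuous (fun r : ℝ => 1 / (3 + r ^ 2)) :=
      continuous_const.div (by fun_prop) (fun r => by positivity)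
    simpa using this.tendsto 0 |>.mono_left nhdsWithin_le_nhds
  refine tendsto_of_tendsto_of_tendsto_of_le_of_le' hlower tendsto_const_nhds ?_ ?_
  · filter_upwards [self_mem_nhdsWithin] with r hr using one_div_three_add_sq_le hr
  · filter_upwards [self_mem_nhdsWithin] with r hr using one_div_sq_sub_one_div_sinh_sq_le hr.ne'

theorem abs_one_div_sub_one_div_tanh_mul_one_div_sinh_le (hr : 0 < r) :
    |(1 / r - 1 / tanh r) * (1 / sinh r)| ≤ 1 / 3 := by
  have hs : 0 < sinh r := sinh_pos_iff.mpr hr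
  have heq : (1 / r - 1 / tanh r) * (1 / sinh r) =
      -((r * cosh r - sinh r) / (r * sinh r ^ 2)) := by
    rw [tanh_eq_sinh_div_cosh]
    field_simp
    ring
  have hnum : 0 ≤ r * cosh r - sinh r := sub_nonneg.mpr (sinh_le_mul_cosh hr.le)
  rw [heq, abs_neg, abs_of_nonneg (by positivity), div_le_div_iff₀ (by positivity) three_pos]
  nlinarith [three_mul_mul_cosh_le hr.le, self_lt_sinh_iff.mpr hr]

end Real

/-- **Pointwise bounds on `d_{A_{BPS}} Φ_{BPS}`**, reduced to elementary inequalities: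
the function `h(r) = 1/tanh(r) - 1/r` has derivative `h'(r) = 1/r² - 1/sinh²(r)` on
`(0,∞)`, with `0 ≤ h'(r) ≤ 1/3` and `h'(r) → 1/3` as `r → 0⁺`; and the function
`k(r) = (1/r - 1/tanh(r)) / sinh(r)` satisfies `|k(r)| ≤ 1/3` for all `r > 0`. -/
theorem bps_derivative_bounds :
    (∀ r : ℝ, 0 < r →
      HasDerivAt (fun s : ℝ => 1 / Real.tanh s - 1 / s)
        (1 / r ^ 2 - 1 / Real.sinh r ^ 2) r) ∧
    (∀ r : ℝ, 0 < r →
      0 ≤ 1 / r ^ 2 - 1 / Real.sinh r ^ 2 ∧ 1 / r ^ 2 - 1 / Real.sinh r ^ 2 ≤ 1 / 3) ∧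
    Tendsto (fun r : ℝ => 1 / r ^ 2 - 1 / Real.sinh r ^ 2)
      (nhdsWithin 0 (Ioi 0)) (nhds (1 / 3)) ∧
    (∀ r : ℝ, 0 < r →
      |(1 / r - 1 / Real.tanh r) * (1 / Real.sinh r)| ≤ 1 / 3) :=
  ⟨fun _ hr => Real.hasDerivAt_one_div_tanh_sub_one_div hr.ne',
    fun _ hr => ⟨Real.one_div_sq_sub_one_div_sinh_sq_nonneg hr,
      Real.one_div_sq_sub_one_div_sinh_sq_le hr.ne'⟩,
    Real.tendsto_one_div_sq_sub_one_div_sinh_sq,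
    fun _ hr => Real.abs_one_div_sub_one_div_tanh_mul_one_div_sinh_le hr⟩
end
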